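/- arXiv:1406.7529 — 4 statements merged into one kernel-verified Lean document; each statement's English description precedes it below -/
import Mathlib

section
/- Let α be an element of F_4 not in F_2. Then the polynomial t^6 + t^2 + t + α is irreducible over F_4. -/
open Polynomial

private lemma cert16 (α : GaloisField 2 2) (hA : (C α) ^ 2 + C α + 1 = (0 : (GaloisField 2 2)[X]))
    (h2 : (2 : (GaloisField 2 2)[X]) = 0) :
    ((1 + C α) + X + (1 + C α) * X ^ 2 + C α * X ^ 3 + (1 + C α) * X ^ 4 + (1 + C α) * X ^ 5 + X ^ 7 + X ^ 8 + X ^ 9 + C α * X ^ 10 + X ^ 12 + (1 + C α) * X ^ 15) * (X ^ 6 + X ^ 2 + X + C α) + (1 + (1 + C α) * X + X ^ 2 + (1 + C α) * X ^ 5) * (X ^ 16 - X) = 1 := by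
  linear_combination ((1 : (GaloisField 2 2)[X]) + X ^ 2 + X ^ 3 + X ^ 4 + X ^ 5 + X ^ 10 + X ^ 15) * hA + ((-1 : (GaloisField 2 2)[X]) + X ^ 6 + X ^ 7 + X ^ 8 + X ^ 9 + X ^ 10 + X ^ 11 + X ^ 13 + X ^ 14 + X ^ 16 + X ^ 17 + X ^ 18 + X ^ 21 + C α * X + C α * X ^ 4 + C α * X ^ 5 + C α * X ^ 6 + C α * X ^ 7 + C α * X ^ 8 + C α * X ^ 9 + C α * X ^ 11 + C α * X ^ 12 + C α * X ^ 16 + C α * X ^ 17 + C α * X ^ 21) * h2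

private lemma cert64 (α : GaloisField 2 2) (hA : (C α) ^ 2 + C α + 1 = (0 : (GaloisField 2 2)[X]))
    (h2 : (2 : (GaloisField 2 2)[X]) = 0) :
    ((1 + C α) + (1 + C α) * X + (1 + C α) * X ^ 2 + C α * X ^ 3 + (1 + C α) * X ^ 4 + C α * X ^ 7 + (1 + C α) * X ^ 8 + C α * X ^ 9 + X ^ 10 + C α * X ^ 11 + C α * X ^ 12 + X ^ 13 + C α * X ^ 15 + C α * X ^ 16 + X ^ 17 + (1 + C α) * X ^ 18 + C α * X ^ 19 + (1 + C α) * X ^ 20 + C α * X ^ 21 + C α * X ^ 22 + (1 + C α) * X ^ 23 + X ^ 24 + X ^ 26 + C α * X ^ 27 + (1 + C α) * X ^ 28 + X ^ 29 + C α * X ^ 30 + C α * X ^ 31 + (1 + C α) * X ^ 32 + C α * X ^ 33 + X ^ 34 + X ^ 35 + X ^ 36 + X ^ 37 + C α * X ^ 38 + (1 + C α) * X ^ 39 + X ^ 41 + X ^ 44 + X ^ 45 + (1 + C α) * X ^ 50 + X ^ 51 + X ^ 52 + (1 + C α) * X ^ 54 + C α * X ^ 55 + X ^ 56 + X ^ 57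 + (1 + C α) * X ^ 58 + X ^ 59 + (1 + C α) * X ^ 60 + X ^ 62) * (X ^ 6 + X ^ 2 + X + C α) + (C α + X + (1 + C α) * X ^ 2 + X ^ 4) * (X ^ 64 - X) = 1 := by
  linear_combination ((1 : (GaloisField 2 2)[X]) + X + X ^ 2 + X ^ 3 + X ^ 4 + X ^ 7 + X ^ 8 + X ^ 9 + X ^ 11 + X ^ 12 + X ^ 15 + X ^ 16 + X ^ 18 + X ^ 19 + X ^ 20 + X ^ 21 + X ^ 22 + X ^ 23 + X ^ 27 + X ^ 28 + X ^ 30 + X ^ 31 + X ^ 32 + X ^ 33 + X ^ 38 + X ^ 39 + X ^ 50 + X ^ 54 + X ^ 55 + X ^ 58 + X ^ 60) * hA + ((-1 : (GaloisField 2 2)[X]) + X ^ 6 + X ^ 10 + X ^ 14 + X ^ 19 + X ^ 24 + X ^ 25 + X ^ 26 + X ^ 29 + X ^ 30 + X ^ 34 + X ^ 35 + X ^ 36 + X ^ 37 + X ^ 38 + X ^ 40 + X ^ 41 + X ^ 42 + X ^ 43 + X ^ 45 + X ^ 46 + X ^ 47 + X ^ 51 + X ^ 52 + X ^ 53 + X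 ^ 56 + X ^ 57 + X ^ 58 + X ^ 59 + X ^ 60 + X ^ 61 + X ^ 62 + X ^ 63 + X ^ 64 + X ^ 65 + X ^ 66 + X ^ 68 + C α * X ^ 2 + C α * X ^ 4 + C α * X ^ 5 + C α * X ^ 6 + C α * X ^ 8 + C α * X ^ 9 + (2 : (GaloisField 2 2)[X]) * C α * X ^ 10 + (2 : (GaloisField 2 2)[X]) * C α * X ^ 13 + C α * X ^ 14 + (2 : (GaloisField 2 2)[X]) * C α * X ^ 17 + C α * X ^ 18 + C α * X ^ 20 + C α * X ^ 21 + C α * X ^ 22 + C α * X ^ 23 + (2 : (GaloisField 2 2)[X]) * C α * X ^ 24 + C α * X ^ 25 + C α * X ^ 26 + C α * X ^ 28 + (2 : (GaloisField 2 2)[X]) * C α * X ^ 29 + C α * X ^ 32 + C α * X ^ 33 + (2 : (GaloisField 2 2)[X]) * C α * X ^ 34 + C α * X ^ 35 + C α * X ^ 36 + C α * X ^ 37 + C α * X ^ 39 + C α * X ^ 40 + C α * X ^ 41 + C α * X ^ 44 + C α * X ^ 45 + C α * X ^ 51 + C α * X ^ 52 + (2 : (GaloisField 2 2)[X]) * C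 α * X ^ 56 + C α * X ^ 57 + C α * X ^ 59 + C α * X ^ 60 + C α * X ^ 61 + C α * X ^ 62 + C α * X ^ 64 + C α * X ^ 66) * h2

private lemma dvd_pow_lemma (q : (GaloisField 2 2)[X]) (hq : Irreducible q) (k : ℕ) :
    q ∣ X ^ ((4 ^ q.natDegree) ^ k) - X := by
  haveI := Fact.mk hq
  have hq0 : q ≠ 0 := hq.ne_zero
  haveI : Module.Finite (GaloisField 2 2) (AdjoinRoot q) :=
    Module.Finite.of_basis (AdjoinRoot.powerBasisAux hq0)
  haveI : Finite (AdjoinRoot q) := Module.finite_of_finite (GaloisField 2 2)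
  haveI : Fintype (AdjoinRoot q) := Fintype.ofFinite _
  haveI : Fintype (GaloisField 2 2) := Fintype.ofFinite _
  have hcard4 : Fintype.card (GaloisField 2 2) = 4 := by
    rw [← Nat.card_eq_fintype_card, GaloisField.card 2 2 (by norm_num)]; norm_num
  have hfr : Module.finrank (GaloisField 2 2) (AdjoinRoot q) = q.natDegree := by
    rw [Module.finrank_eq_card_basis (AdjoinRoot.powerBasisAux hq0), Fintype.card_fin]
  have hcard : Fintype.card (AdjoinRoot q) = 4 ^ q.natDegree := by
    rw [Module.card_eq_pow_finrank (K := GaloisField 2 2), hcard4, hfr]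
  have hroot : (AdjoinRoot.root q) ^ ((4 ^ q.natDegree) ^ k) = AdjoinRoot.root q := by
    rw [← hcard]; exact FiniteField.pow_card_pow k _
  rw [← AdjoinRoot.mk_eq_zero, map_sub, map_pow, AdjoinRoot.mk_X, sub_eq_zero]
  exact hroot

theorem stmt_2 (α : GaloisField 2 2)
    (hα : α ∉ Set.range (algebraMap (ZMod 2) (GaloisField 2 2))) :
    Irreducible ((X ^ 6 + X ^ 2 + X + C α : (GaloisField 2 2)[X])) := by
  have h2 : (2 : GaloisField 2 2) = 0 := by
    have := CharP.cast_eq_zero (GaloisField 2 2) 2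
    exact_mod_cast this
  haveI : Fintype (GaloisField 2 2) := Fintype.ofFinite _
  have hcard4 : Fintype.card (GaloisField 2 2) = 4 := by
    rw [← Nat.card_eq_fintype_card, GaloisField.card 2 2 (by norm_num)]; norm_num
  have h4 : α ^ 4 = α := by
    have := FiniteField.pow_card α
    rwa [hcard4] at this
  have hmul : α * (α + 1) * (α ^ 2 + α + 1) = 0 := by
    linear_combination h4 + (α ^ 3 + α ^ 2 + α) * h2
  have hαeq : α ^ 2 + α + 1 = 0 := by
    rcases mul_eq_zero.mp hmul with h | h
    · rcases mul_eq_zero.mp h with h | h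
      · exact absurd ⟨0, by simp [h]⟩ hα
      · have h1 : α = 1 := by linear_combination h - h2
        exact absurd ⟨1, by simp [h1]⟩ hα
    · exact h
  have hA : (C α) ^ 2 + C α + 1 = (0 : (GaloisField 2 2)[X]) := by
    have := congrArg C hαeq
    simp only [map_add, map_pow, map_one, map_zero] at this
    exact this
  have h2X : (2 : (GaloisField 2 2)[X]) = 0 := by
    rw [← map_ofNat C 2, h2, map_zero]
  by_contra hirr
  set P : (GaloisField 2 2)[X] := X ^ 6 + X ^ 2 + X + C α with hP
  have hPdeg : P.natDegree = 6 := by rw [hP]; compute_degree!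
  have hPm : P.Monic := by rw [Monic.def, hP]; monicity!
  have hP0 : P ≠ 0 := hPm.ne_zero
  rw [irreducible_iff] at hirr
  push_neg at hirr
  obtain ⟨a, b, hab, ha, hb⟩ :=
    hirr (not_isUnit_of_natDegree_pos _ (by rw [hPdeg]; norm_num))
  have ha0 : a ≠ 0 := by rintro rfl; exact hP0 (by simp [hab])
  have hb0 : b ≠ 0 := by rintro rfl; exact hP0 (by simp [hab])
  have hdeg : a.natDegree + b.natDegree = 6 := by
    rw [← hPdeg, hab, natDegree_mul ha0 hb0]
  obtain ⟨c, hcP, hc0, hcu, hcd⟩ :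
      ∃ c : (GaloisField 2 2)[X], c ∣ P ∧ c ≠ 0 ∧ ¬IsUnit c ∧ c.natDegree ≤ 3 := by
    rcases le_or_gt a.natDegree 3 with h | h
    · exact ⟨a, ⟨b, hab⟩, ha0, ha, h⟩
    · exact ⟨b, ⟨a, by rw [hab]; ring⟩, hb0, hb, by omega⟩
  obtain ⟨q, hq, hqc⟩ := WfDvdMonoid.exists_irreducible_factor hcu hc0
  have hqP : q ∣ P := hqc.trans hcP
  have hd1 : 1 ≤ q.natDegree := hq.natDegree_pos
  have hd3 : q.natDegree ≤ 3 := le_trans (natDegree_le_of_dvd hqc hc0) hcd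
  interval_cases hdn : q.natDegree
  · have h16 : q ∣ X ^ 16 - X := by
      have := dvd_pow_lemma q hq 2
      rw [hdn] at this; norm_num at this; exact this
    have : q ∣ 1 := by
      rw [← cert16 α hA h2X]
      exact dvd_add (hqP.mul_left _) (h16.mul_left _)
    exact hq.not_isUnit (isUnit_of_dvd_one this)
  · have h16 : q ∣ X ^ 16 - X := by
      have := dvd_pow_lemma q hq 1
      rw [hdn] at this; norm_num at this; exact this
    have : q ∣ 1 := by
      rw [← cert16 α hA h2X]
      exact dvd_add (hqP.mul_left _) (h16.mul_left _)
    exact hq.not_isUnit (isUnit_of_dvd_one this)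
  · have h64 : q ∣ X ^ 64 - X := by
      have := dvd_pow_lemma q hq 1
      rw [hdn] at this; norm_num at this; exact this
    have : q ∣ 1 := by
      rw [← cert64 α hA h2X]
      exact dvd_add (hqP.mul_left _) (h64.mul_left _)
    exact hq.not_isUnit (isUnit_of_dvd_one this)
end

section
/- Let F be an algebraically closed field of characteristic 2, p an odd prime, m ≥ 1, and n = 2p^m. Let G = (Z/pZ)^m × (Z/pZ)^m act on F^n by the direct sum of two copies of the regular permutation representation of (Z/pZ)^m on F^{p^m}. Then no 2-dimensional G-invariant linear subspace of F^n is contained in the set X = { (a_1,…,a_n) : a_1^k + ⋯ + a_n^k = 0 for all k = 1,…,p }. -/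
open Finset

section Aux

variable {F : Type*} [Field F] {p m : ℕ} [Fact p.Prime]

/-- dot product on `(Fin m → ZMod p)` -/
private def dd {p m : ℕ} (t s : Fin m → ZMod p) : ZMod p := ∑ i, t i * s i

private lemma dd_comm (t s : Fin m → ZMod p) : dd t s = dd s t :=
  Finset.sum_congr rfl fun i _ => mul_comm _ _

private lemma dd_add (t x y : Fin m → ZMod p) : dd t (x + y) = dd t x + dd t y := by
  unfold dd
  rw [← Finset.sum_add_distrib]
  exact Finset.sum_congr rfl fun i _ => by simp [mul_add]

private lemma zero_dd (t : Fin m → ZMod p) : dd (0 : Fin m → ZMod p) t = 0 := by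
  simp [dd]

private lemma addchar_sum_eq {ι : Type*} (e : AddChar (ZMod p) F) (s : Finset ι)
    (f : ι → ZMod p) : e (∑ i ∈ s, f i) = ∏ i ∈ s, e (f i) := by
  classical
  induction s using Finset.cons_induction with
  | empty => simp
  | cons i s hi ih =>
    rw [Finset.sum_cons, Finset.prod_cons, AddChar.map_add_eq_mul, ih]

private lemma single_sum (e : AddChar (ZMod p) F) (he : e ≠ 1) {c : ZMod p} (hc : c ≠ 0) :
    ∑ z : ZMod p, e (z * c) = 0 := by
  classical
  have hprim : e.IsPrimitive := AddChar.IsPrimitive.of_ne_one he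
  have h1 : e.mulShift c ≠ 1 := hprim hc
  have h0 : e.mulShift c ≠ 0 := h1
  have h := AddChar.sum_eq_ite (e.mulShift c)
  rw [if_neg h0] at h
  calc ∑ z : ZMod p, e (z * c) = ∑ z : ZMod p, e.mulShift c z := by
        refine Finset.sum_congr rfl fun z _ => ?_
        rw [AddChar.mulShift_apply, mul_comm]
    _ = 0 := h

private lemma char_sum (e : AddChar (ZMod p) F) (he : e ≠ 1)
    (hp1 : ((p : ℕ) : F) = 1) (v : Fin m → ZMod p) :
    ∑ t : Fin m → ZMod p, e (dd t v) = if v = 0 then 1 else 0 := by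
  classical
  have h1 : ∑ t : Fin m → ZMod p, e (dd t v)
      = ∑ t : Fin m → ZMod p, ∏ i, e (t i * v i) :=
    Finset.sum_congr rfl fun t _ => addchar_sum_eq e _ _
  have h2 : (∏ i : Fin m, ∑ z : ZMod p, e (z * v i))
      = ∑ t : Fin m → ZMod p, ∏ i, e (t i * v i) := Fintype.prod_sum _
  rw [h1, ← h2]
  by_cases hv : v = 0
  · subst hv
    simp only [Pi.zero_apply, mul_zero, AddChar.map_zero_eq_one, if_pos rfl]
    rw [Finset.prod_congr rfl fun i _ => Finset.sum_const 1]
    simp [ZMod.card, hp1]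
  · rw [if_neg hv]
    obtain ⟨i, hi⟩ := Function.ne_iff.mp hv
    exact Finset.prod_eq_zero (Finset.mem_univ i) (single_sum e he hi)

/-- Fourier coefficient -/
private noncomputable def hatc (e : AddChar (ZMod p) F)
    (a : (Bool × (Fin m → ZMod p)) → F) (b : Bool) (t : Fin m → ZMod p) : F :=
  ∑ s : Fin m → ZMod p, e (dd t s) * a (b, s)

private lemma inversion (e : AddChar (ZMod p) F) (he : e ≠ 1) (hp1 : ((p : ℕ) : F) = 1)
    (a : (Bool × (Fin m → ZMod p)) → F) (b : Bool) (s : Fin m → ZMod p) :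
    a (b, s) = ∑ t : Fin m → ZMod p, e (dd t (-s)) * hatc e a b t := by
  classical
  unfold hatc
  symm
  calc ∑ t : Fin m → ZMod p, e (dd t (-s)) * ∑ u : Fin m → ZMod p, e (dd t u) * a (b, u)
      = ∑ t : Fin m → ZMod p, ∑ u : Fin m → ZMod p, e (dd t (u - s)) * a (b, u) := by
        refine Finset.sum_congr rfl fun t _ => ?_
        rw [Finset.mul_sum]
        refine Finset.sum_congr rfl fun u _ => ?_
        rw [← mul_assoc, ← AddChar.map_add_eq_mul, ← dd_add]
        congr 2
        abel_nf
    _ = ∑ u : Fin m → ZMod p, (∑ t : Fin m → ZMod p, e (dd t (u - s))) * a (b, u) := by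
        rw [Finset.sum_comm]
        exact Finset.sum_congr rfl fun u _ => (Finset.sum_mul _ _ _).symm
    _ = a (b, s) := by
        simp only [char_sum e he hp1, sub_eq_zero, ite_mul, one_mul, zero_mul,
          Finset.sum_ite_eq', Finset.mem_univ, if_true]

end Aux

theorem stmt_8 (F : Type*) [Field F] [IsAlgClosed F] [CharP F 2]
    (p m : ℕ) [Fact p.Prime] (hodd : Odd p) (hm : 1 ≤ m)
    (V : Submodule F ((Bool × (Fin m → ZMod p)) → F))
    (hdim : Module.finrank F V = 2)
    (hinv : ∀ g₁ g₂ : Fin m → ZMod p, ∀ a ∈ V,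
      (fun x : Bool × (Fin m → ZMod p) => a (x.1, x.2 + (if x.1 then g₁ else g₂))) ∈ V) :
    ¬ (∀ a ∈ V, ∀ k ∈ Finset.Icc 1 p, ∑ x : Bool × (Fin m → ZMod p), a x ^ k = 0) := by
  classical
  intro H
  have hp : p.Prime := Fact.out
  -- `p = 1` in `F`
  have h2 : ((2 : ℕ) : F) = 0 := CharP.cast_eq_zero F 2
  have hp1 : ((p : ℕ) : F) = 1 := by
    obtain ⟨k, hk⟩ := hodd
    subst hk
    push_cast
    push_cast at h2
    rw [h2]
    ring
  have hpm1 : ((p ^ m : ℕ) : F) = 1 := by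
    push_cast
    rw [hp1, one_pow]
  haveI : NeZero ((p : ℕ) : F) := ⟨by rw [hp1]; exact one_ne_zero⟩
  haveI : NeZero p := ⟨hp.pos.ne'⟩
  obtain ⟨ζ, hζ⟩ := HasEnoughRootsOfUnity.exists_primitiveRoot F p
  let e : AddChar (ZMod p) F := AddChar.zmodChar p hζ.pow_eq_one
  haveI : Fact (1 < p) := ⟨hp.one_lt⟩
  have he : e ≠ 1 := by
    rw [AddChar.ne_one_iff]
    refine ⟨1, ?_⟩
    rw [show e 1 = ζ ^ (1 : ZMod p).val from AddChar.zmodChar_apply _ _, ZMod.val_one, pow_one]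
    exact hζ.ne_one hp.one_lt
  have epow : ∀ z : ZMod p, e z ^ p = 1 := fun z => by
    rw [show e z = ζ ^ z.val from AddChar.zmodChar_apply _ _, ← pow_mul, mul_comm, pow_mul,
      hζ.pow_eq_one, one_pow]
  -- all nontrivial Fourier coefficients of elements of `V` vanish
  have key : ∀ a ∈ V, ∀ (b : Bool) (t : Fin m → ZMod p), t ≠ 0 → hatc e a b t = 0 := by
    intro a ha b t ht
    have hshift : ∀ g : Fin m → ZMod p,
        (fun x : Bool × (Fin m → ZMod p) => a (x.1, x.2 + if x.1 = b then g else 0)) ∈ V := by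
      intro g
      cases b
      · have h := hinv 0 g a ha
        have hfun : (fun x : Bool × (Fin m → ZMod p) =>
            a (x.1, x.2 + if x.1 = false then g else 0))
            = (fun x : Bool × (Fin m → ZMod p) =>
            a (x.1, x.2 + (if x.1 then 0 else g))) := by
          funext x
          rcases x with ⟨b', s⟩
          cases b' <;> rfl
        rw [hfun]; exact h
      · have h := hinv g 0 a ha
        have hfun : (fun x : Bool × (Fin m → ZMod p) =>
            a (x.1, x.2 + if x.1 = true then g else 0))
            = (fun x : Bool × (Fin m → ZMod p) =>
            a (x.1, x.2 + (if x.1 then g else 0))) := by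
          funext x
          rcases x with ⟨b', s⟩
          cases b' <;> rfl
        rw [hfun]; exact h
    set P : (Bool × (Fin m → ZMod p)) → F :=
      fun x => ∑ g : Fin m → ZMod p, e (dd t g) * a (x.1, x.2 + if x.1 = b then g else 0)
      with hPdef
    have hPV : P ∈ V := by
      have hP2 : P = ∑ g : Fin m → ZMod p, e (dd t g) •
          (fun x : Bool × (Fin m → ZMod p) => a (x.1, x.2 + if x.1 = b then g else 0)) := by
        funext x
        simp [hPdef, Finset.sum_apply]
      rw [hP2]
      exact Submodule.sum_mem _ fun g _ => Submodule.smul_mem _ _ (hshift g)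
    have hPb : ∀ s, P (b, s) = e (dd t (-s)) * hatc e a b t := by
      intro s
      show (∑ g : Fin m → ZMod p, e (dd t g) * a (b, s + if b = b then g else 0))
        = e (dd t (-s)) * hatc e a b t
      simp only [if_pos rfl]
      unfold hatc
      rw [Finset.mul_sum]
      refine Fintype.sum_equiv (Equiv.addLeft s) _ _ fun g => ?_
      show e (dd t g) * a (b, s + g) = e (dd t (-s)) * (e (dd t (s + g)) * a (b, s + g))
      rw [← mul_assoc, ← AddChar.map_add_eq_mul, ← dd_add, neg_add_cancel_left]
    have hPnb : ∀ s, P (!b, s) = 0 := by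
      intro s
      show (∑ g : Fin m → ZMod p, e (dd t g) * a (!b, s + if (!b) = b then g else 0)) = 0
      have hb : ((!b) = b) = False := by simp
      simp only [hb, if_false, add_zero, ← Finset.sum_mul]
      have hsum : ∑ g : Fin m → ZMod p, e (dd t g) = 0 := by
        rw [Finset.sum_congr rfl fun g _ => by rw [dd_comm t g],
          char_sum e he hp1 t, if_neg ht]
      rw [hsum, zero_mul]
    have hps := H P hPV p (Finset.mem_Icc.mpr ⟨hp.one_le, le_rfl⟩)
    rw [Fintype.sum_prod_type, Fintype.sum_bool] at hps
    have hsum0 : ∀ s : Fin m → ZMod p, P (!b, s) ^ p = 0 := fun s => by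
      rw [hPnb s, zero_pow hp.pos.ne']
    have hsumC : ∑ s : Fin m → ZMod p, P (b, s) ^ p = hatc e a b t ^ p := by
      have : ∀ s : Fin m → ZMod p, P (b, s) ^ p = hatc e a b t ^ p := fun s => by
        rw [hPb s, mul_pow, epow, one_mul]
      rw [Finset.sum_congr rfl fun s _ => this s, Finset.sum_const, nsmul_eq_mul]
      rw [Finset.card_univ]
      have hcard : (Fintype.card (Fin m → ZMod p) : F) = 1 := by
        rw [Fintype.card_fun, ZMod.card, Fintype.card_fin, hpm1]
      rw [hcard, one_mul]
    have hCp : hatc e a b t ^ p = 0 := by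
      cases b
      · -- b = false : first summand is `!b = true` side
        have hA : ∑ s : Fin m → ZMod p, P (true, s) ^ p = 0 :=
          Finset.sum_eq_zero fun s _ => hsum0 s
        rw [hA, zero_add] at hps
        rw [← hsumC]
        exact hps
      · have hA : ∑ s : Fin m → ZMod p, P (false, s) ^ p = 0 :=
          Finset.sum_eq_zero fun s _ => hsum0 s
        rw [hA, add_zero] at hps
        rw [← hsumC]
        exact hps
    exact pow_eq_zero_iff hp.pos.ne' |>.mp hCp
  -- the value `hatc e a b 0` is the plain sum over the side `b`
  have hat0 : ∀ (a : (Bool × (Fin m → ZMod p)) → F) (b : Bool),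
      hatc e a b 0 = ∑ s : Fin m → ZMod p, a (b, s) := by
    intro a b
    unfold hatc
    refine Finset.sum_congr rfl fun s _ => ?_
    rw [zero_dd, AddChar.map_zero_eq_one, one_mul]
  -- both trivial Fourier coefficients agree
  have hat_eq : ∀ a ∈ V, hatc e a false 0 = hatc e a true 0 := by
    intro a ha
    have h1 := H a ha 1 (Finset.mem_Icc.mpr ⟨le_rfl, hp.one_le⟩)
    simp only [pow_one] at h1
    rw [Fintype.sum_prod_type, Fintype.sum_bool, ← hat0 a true, ← hat0 a false] at h1
    have := eq_neg_of_add_eq_zero_left h1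
    rw [this, CharTwo.neg_eq]
  -- every element of `V` is constant
  have const : ∀ a ∈ V, ∀ x : Bool × (Fin m → ZMod p), a x = hatc e a true 0 := by
    intro a ha x
    obtain ⟨b, s⟩ := x
    rw [inversion e he hp1 a b s, Finset.sum_eq_single 0]
    · rw [zero_dd, AddChar.map_zero_eq_one, one_mul]
      cases b
      · exact hat_eq a ha
      · rfl
    · intro t _ ht
      rw [key a ha b t ht, mul_zero]
    · intro h
      exact absurd (Finset.mem_univ 0) h
  -- conclude: V is contained in the line spanned by the constant function 1
  have hone : (fun _ : Bool × (Fin m → ZMod p) => (1 : F)) ≠ 0 := by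
    intro h
    exact one_ne_zero (congrFun h (true, 0))
  have hle : V ≤ Submodule.span F {fun _ : Bool × (Fin m → ZMod p) => (1 : F)} := by
    intro a ha
    have ha2 : a = hatc e a true 0 • (fun _ : Bool × (Fin m → ZMod p) => (1 : F)) := by
      funext x
      rw [const a ha x]
      simp
    rw [ha2]
    exact Submodule.smul_mem _ _ (Submodule.mem_span_singleton_self _)
  have hfin : Module.finrank F V ≤
      Module.finrank F (Submodule.span F {fun _ : Bool × (Fin m → ZMod p) => (1 : F)}) :=
    Submodule.finrank_mono hle
  rw [hdim, finrank_span_singleton hone] at hfin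
  omega
end

section
/- Let F be a field of characteristic 2 and n an even positive integer. Let X ⊆ F^n be the common zero set of the power-sum polynomials s_k(a) = a_1^k + ⋯ + a_n^k for k = 1, …, p (p odd). If α ∈ X then α + c·(1,1,…,1) ∈ X for every c ∈ F; i.e., X is stable under translation by scalar multiples of the all-ones vector. -/
theorem stmt_10 (F : Type*) [Field F] [CharP F 2]
    (n p : ℕ) (hn : Even n) (hn0 : 0 < n) (hodd : Odd p)
    (α : Fin n → F) (hα : ∀ k ∈ Finset.Icc 1 p, ∑ i, α i ^ k = 0) (c : F) :
    ∀ k ∈ Finset.Icc 1 p, ∑ i, (α i + c) ^ k = 0 := by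
  intro k hk
  obtain ⟨hk1, hkp⟩ := Finset.mem_Icc.mp hk
  simp only [add_pow]
  rw [Finset.sum_comm]
  apply Finset.sum_eq_zero
  intro j hj
  rw [← Finset.sum_mul, ← Finset.sum_mul]
  rcases Nat.eq_zero_or_pos j with h0 | hpos
  · subst h0
    simp only [pow_zero, Finset.sum_const, Finset.card_univ, Fintype.card_fin,
      nsmul_eq_mul, mul_one]
    have : (n : F) = 0 := by
      obtain ⟨m, hm⟩ := hn
      have : (2 : F) = 0 := by exact_mod_cast CharP.cast_eq_zero F 2
      push_cast [hm]
      ring_nf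
      rw [show ((m:F) * 2) = (m:F) * 2 by ring, this]
      ring
    simp [this]
  · have : ∑ i, α i ^ j = 0 :=
      hα j (Finset.mem_Icc.mpr ⟨hpos, le_trans (Nat.lt_succ_iff.mp (Finset.mem_range.mp hj)) hkp⟩)
    rw [this, zero_mul, zero_mul]
end

section
/- Let q be a power of 2 and K = F_q, L = F_{q^6}. An element y ∈ L that does not generate L over K satisfies Tr_{L/K}(y) = Tr_{L/K}(y^3) = 0 if and only if y ∈ F_{q^3}. -/
/-!
A non-generator y has [K(y) : K] ∈ {1, 2, 3}. In characteristic 2, the trace from L of an element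
of an intermediate field M is [L : M] times its trace from M, so it vanishes on the cubic subfields
([L : M] = 2), while on a quadratic K(y) it equals Tr_{K(y)/K}(y) = y + σy, which vanishes only
when σ fixes y, i.e. y ∈ K. Cubic subfields exist: they are fixed fields of subgroups of order 2
of Gal(L/K).
-/

open Module IntermediateField

section Tower

variable {K M L : Type*} [Field K] [Field M] [Field L] [Algebra K M] [Algebra M L] [Algebra K L]
  [IsScalarTower K M L] [FiniteDimensional K M] [FiniteDimensional M L]

theorem Algebra.trace_algebraMap_eq_finrank_nsmul (x : M) :
    Algebra.trace K L (algebraMap M L x) = finrank M L • Algebra.trace K M x := by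
  rw [← Algebra.trace_trace (S := M), Algebra.trace_algebraMap, map_nsmul]

variable [CharP K 2]

theorem Algebra.trace_algebraMap_eq_zero_of_even (h : Even (finrank M L)) (x : M) :
    Algebra.trace K L (algebraMap M L x) = 0 := by
  rw [Algebra.trace_algebraMap_eq_finrank_nsmul, nsmul_eq_mul,
    natCast_eq_zero_of_even_of_two_eq_zero h CharTwo.two_eq_zero, zero_mul]

theorem Algebra.trace_algebraMap_eq_trace_of_odd (h : Odd (finrank M L)) (x : M) :
    Algebra.trace K L (algebraMap M L x) = Algebra.trace K M x := by
  rw [Algebra.trace_algebraMap_eq_finrank_nsmul, nsmul_eq_mul,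
    natCast_eq_one_of_odd_of_two_eq_zero h CharTwo.two_eq_zero, one_mul]

end Tower

theorem IntermediateField.mem_bot_of_trace_eq_zero_of_finrank_eq_two {K E : Type*} [Field K]
    [Field E] [Algebra K E] [CharP K 2] [IsGalois K E] (h2 : finrank K E = 2) {x : E}
    (hx : Algebra.trace K E x = 0) : x ∈ (⊥ : IntermediateField K E) := by
  classical
  have : FiniteDimensional K E := Module.finite_of_finrank_eq_succ h2
  have : CharP E 2 := charP_of_injective_algebraMap' K 2
  refine (IsGalois.mem_bot_iff_fixed x).mpr fun σ ↦ ?_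
  by_cases hσ : σ = 1
  · rw [hσ, AlgEquiv.one_apply]
  have huniv : (Finset.univ : Finset Gal(E/K)) = {1, σ} := by
    refine (Finset.eq_univ_of_card _ ?_).symm
    rw [Finset.card_pair (Ne.symm hσ), ← Nat.card_eq_fintype_card, IsGalois.card_aut_eq_finrank,
      h2]
  have hsum := trace_eq_sum_automorphisms (K := K) x
  rw [hx, map_zero, huniv, Finset.sum_pair (Ne.symm hσ), AlgEquiv.one_apply] at hsum
  exact (eq_neg_of_add_eq_zero_right hsum.symm).trans (CharTwo.neg_eq x)

theorem IntermediateField.trace_ne_zero_of_finrank_adjoin_eq_two {K L : Type*} [Field K]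
    [Field L] [Algebra K L] [CharP K 2] [FiniteDimensional K L] {y : L} [IsGalois K K⟮y⟯]
    (h2 : finrank K K⟮y⟯ = 2) (hodd : Odd (finrank K⟮y⟯ L)) :
    Algebra.trace K L y ≠ 0 := by
  intro htr
  have htrE := (Algebra.trace_algebraMap_eq_trace_of_odd hodd
    ⟨y, mem_adjoin_simple_self K y⟩).symm.trans htr
  obtain ⟨c, hc⟩ := mem_bot.mp (mem_bot_of_trace_eq_zero_of_finrank_eq_two h2 htrE)
  have hy : y ∈ (⊥ : IntermediateField K L) := mem_bot.mpr ⟨c, congrArg Subtype.val hc⟩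
  have := finrank_eq_one_iff.mpr (adjoin_simple_eq_bot_iff.mpr hy)
  omega

theorem IsGalois.exists_finrank_eq_of_prime_dvd {K L : Type*} [Field K] [Field L] [Algebra K L]
    [FiniteDimensional K L] [IsGalois K L] {p : ℕ} [Fact p.Prime] (hp : p ∣ finrank K L) :
    ∃ M : IntermediateField K L, finrank M L = p := by
  rw [← IsGalois.card_aut_eq_finrank, ← pow_one p] at hp
  obtain ⟨H, hH⟩ := Sylow.exists_subgroup_card_pow_prime p hp
  exact ⟨fixedField H, by rw [finrank_fixedField_eq_card, hH, pow_one]⟩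

theorem stmt_13 (K L : Type*) [Field K] [Field L] [Algebra K L]
    [Finite K] [CharP K 2] (h6 : Module.finrank K L = 6)
    (y : L) (hy : IntermediateField.adjoin K {y} ≠ ⊤) :
    (Algebra.trace K L y = 0 ∧ Algebra.trace K L (y ^ 3) = 0) ↔
      ∃ M : IntermediateField K L, Module.finrank K M = 3 ∧ y ∈ M := by
  have : FiniteDimensional K L := Module.finite_of_finrank_eq_succ h6
  have : Finite L := Module.finite_of_finite K
  have htower (M : IntermediateField K L) : finrank K M * finrank M L = 6 :=
    h6 ▸ finrank_mul_finrank K M L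
  constructor
  · rintro ⟨htr, -⟩
    have hyK : y ∈ K⟮y⟯ := mem_adjoin_simple_self K y
    have hne6 : finrank K K⟮y⟯ ≠ 6 := fun h ↦
      hy (eq_of_le_of_finrank_eq le_top (by rw [finrank_top', h6, h]))
    have hne2 : finrank K K⟮y⟯ ≠ 2 := fun h2 ↦
      trace_ne_zero_of_finrank_adjoin_eq_two h2
        ⟨1, by have := htower K⟮y⟯; rw [h2] at this; omega⟩ htr
    obtain hd | hd : finrank K K⟮y⟯ = 1 ∨ finrank K K⟮y⟯ = 3 := by
      have hdvd : finrank K K⟮y⟯ ∣ 6 := Dvd.intro _ (htower K⟮y⟯)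
      have hle := Nat.le_of_dvd (by norm_num) hdvd
      interval_cases finrank K K⟮y⟯ <;> simp_all
    · obtain ⟨M, hM⟩ := IsGalois.exists_finrank_eq_of_prime_dvd (p := 2) (K := K) (L := L)
        (by rw [h6]; norm_num)
      refine ⟨M, by have := htower M; rw [hM] at this; omega, ?_⟩
      exact (bot_le : ⊥ ≤ M) (adjoin_simple_eq_bot_iff.mp (finrank_eq_one_iff.mp hd))
    · exact ⟨K⟮y⟯, hd, hyK⟩
  · rintro ⟨M, hM, hyM⟩
    have heven : Even (finrank M L) := ⟨1, by have := htower M; rw [hM] at this; omega⟩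
    exact ⟨Algebra.trace_algebraMap_eq_zero_of_even heven ⟨y, hyM⟩,
      Algebra.trace_algebraMap_eq_zero_of_even heven ⟨y ^ 3, pow_mem hyM 3⟩⟩
end
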